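/- Truncation error estimate: with π* optimal in Π(μ_1,…,μ_K), compact sets X_k^0 ⊂ X_k satisfying μ_k(X_k∖X_k^0) ≤ ε, X^0 = X_1^0×⋯×X_K^0, and π̃^0 an optimal plan of the truncated problem with marginals of π*|_{X^0}/π*(X^0), the glued plan π̃ satisfies |∫c dπ̃ − ∫_{X^0} c dπ̃^0| ≤ 2K‖c‖_∞ ε; in particular inf over Π(μ_1,…,μ_K) of ∫c dπ is at most the truncated infimum plus 2K‖c‖_∞ ε. -/

import Mathlib

/-!
Gluing `π*(X⁰) • π̃⁰` on the box `X⁰` to `π*` outside it reproduces the marginals of `π*`,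
because the marginals of `π̃⁰` are those of the normalised restriction `π*|_{X⁰} / π*(X⁰)`.
With `δ = π*((X⁰)ᶜ)`, the glued integral is `(1 - δ) ∫ c dπ̃⁰ + ∫_{(X⁰)ᶜ} c dπ*`, which differs
from `∫ c dπ̃⁰` by at most `2 ‖c‖_∞ δ`, and a union bound over the coordinates gives `δ ≤ K ε`.
The glued plan is admissible for the full problem, which yields the comparison of the infima.
-/

open MeasureTheory Set

section Gluing

variable {Ω : Type*} [MeasurableSpace Ω] {π ν : Measure Ω} {S : Set Ω}

lemma isProbabilityMeasure_smul_add_restrict_compl [IsProbabilityMeasure π]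
    [IsProbabilityMeasure ν] (hS : MeasurableSet S) :
    IsProbabilityMeasure (π S • ν + π.restrict Sᶜ) := by
  constructor
  rw [Measure.add_apply, Measure.smul_apply, smul_eq_mul, measure_univ, mul_one,
    Measure.restrict_apply_univ, measure_add_measure_compl hS, measure_univ]

lemma map_smul_add_restrict_compl_eq_map [IsFiniteMeasure π] (hS : MeasurableSet S)
    (hπS : π S ≠ 0) {β : Type*} [MeasurableSpace β] {f : Ω → β} (hf : Measurable f)
    (hν : ν.map f = ((π S)⁻¹ • π.restrict S).map f) :
    (π S • ν + π.restrict Sᶜ).map f = π.map f := by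
  rw [Measure.map_add _ _ hf, Measure.map_smul, hν, Measure.map_smul, smul_smul,
    ENNReal.mul_inv_cancel hπS (measure_ne_top π S), one_smul, ← Measure.map_add _ _ hf,
    Measure.restrict_add_restrict_compl hS]

lemma abs_integral_le_of_abs_le [IsProbabilityMeasure ν] {f : Ω → ℝ} {M : ℝ}
    (hM : ∀ x, |f x| ≤ M) : |∫ x, f x ∂ν| ≤ M := by
  simpa using norm_integral_le_of_norm_le_const (μ := ν) (f := f) (.of_forall hM)

lemma abs_integral_smul_add_restrict_compl_sub_le [IsProbabilityMeasure π]
    [IsProbabilityMeasure ν] (hS : MeasurableSet S) {f : Ω → ℝ} (hf : Measurable f) {M : ℝ}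
    (hM : ∀ x, |f x| ≤ M) :
    |∫ x, f x ∂(π S • ν + π.restrict Sᶜ) - ∫ x, f x ∂ν| ≤ 2 * M * π.real Sᶜ := by
  have hfν : Integrable f ν := .of_bound hf.aestronglyMeasurable M (.of_forall hM)
  have hfπ : Integrable f (π.restrict Sᶜ) := .of_bound hf.aestronglyMeasurable M (.of_forall hM)
  have hglued : ∫ x, f x ∂(π S • ν + π.restrict Sᶜ)
      = (1 - π.real Sᶜ) * ∫ x, f x ∂ν + ∫ x in Sᶜ, f x ∂π := by
    rw [integral_add_measure (hfν.smul_measure (measure_ne_top π S)) hfπ,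
      integral_smul_measure, probReal_compl_eq_one_sub hS, sub_sub_cancel]
    rfl
  have hν : |∫ x, f x ∂ν| ≤ M := abs_integral_le_of_abs_le hM
  have hπ : |∫ x in Sᶜ, f x ∂π| ≤ M * π.real Sᶜ := by
    simpa [Measure.real] using
      norm_integral_le_of_norm_le_const (μ := π.restrict Sᶜ) (f := f) (.of_forall hM)
  have hδ : 0 ≤ π.real Sᶜ := measureReal_nonneg
  calc |∫ x, f x ∂(π S • ν + π.restrict Sᶜ) - ∫ x, f x ∂ν|
      = |-(π.real Sᶜ * ∫ x, f x ∂ν) + ∫ x in Sᶜ, f x ∂π| := by rw [hglued]; ring_nf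
    _ ≤ π.real Sᶜ * |∫ x, f x ∂ν| + |∫ x in Sᶜ, f x ∂π| := by
        grw [abs_add_le, abs_neg, abs_mul, abs_of_nonneg hδ]
    _ ≤ 2 * M * π.real Sᶜ := by nlinarith

end Gluing

lemma measureReal_compl_univ_pi_le {ι : Type*} [Fintype ι] {X : ι → Type*}
    [∀ i, MeasurableSpace (X i)] (π : Measure (∀ i, X i))
    {S : ∀ i, Set (X i)} (hS : ∀ i, MeasurableSet (S i)) {ε : ℝ} (hε : 0 ≤ ε)
    (hmarg : ∀ i, π.map (fun x => x i) (S i)ᶜ ≤ ENNReal.ofReal ε) :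
    π.real (univ.pi S)ᶜ ≤ Fintype.card ι * ε := by
  have hcompl : (univ.pi S)ᶜ = ⋃ i, (fun x => x i) ⁻¹' (S i)ᶜ := by ext; simp
  refine ENNReal.toReal_le_of_le_ofReal (by positivity) ?_
  calc π (univ.pi S)ᶜ ≤ ∑ i, π ((fun x => x i) ⁻¹' (S i)ᶜ) := by
        rw [hcompl]; exact measure_iUnion_fintype_le _ _
    _ ≤ ∑ _i : ι, ENNReal.ofReal ε := by
        gcongr with i
        rw [← Measure.map_apply (measurable_pi_apply i) (hS i).compl]
        exact hmarg i
    _ = ENNReal.ofReal (Fintype.card ι * ε) := by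
        rw [Finset.sum_const, Finset.card_univ, nsmul_eq_mul, ENNReal.ofReal_mul (by positivity),
          ENNReal.ofReal_natCast]

theorem truncation_error_estimate_general {K : ℕ} {X : Fin K → Type*}
    [∀ k, TopologicalSpace (X k)] [∀ k, PolishSpace (X k)]
    [∀ k, MeasurableSpace (X k)] [∀ k, BorelSpace (X k)]
    (μ : ∀ k, Measure (X k))
    (c : (∀ k, X k) → ℝ) (hc_cont : Continuous c)
    (M : ℝ) (hM : ∀ x, |c x| ≤ M)
    (ε : ℝ) (hε : 0 < ε)
    (X0 : ∀ k, Set (X k)) (hX0c : ∀ k, IsCompact (X0 k))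
    (hX0μ : ∀ k, (μ k) (X0 k)ᶜ ≤ ENNReal.ofReal ε)
    (πstar : Measure (∀ k, X k)) [IsProbabilityMeasure πstar]
    (hπstar : ∀ k, πstar.map (fun x => x k) = μ k)
    (hpos : 0 < πstar (Set.univ.pi X0))
    (πt0 : Measure (∀ k, X k)) [IsProbabilityMeasure πt0]
    (hsupp : πt0 (Set.univ.pi X0)ᶜ = 0)
    (hmarg : ∀ k, πt0.map (fun x => x k)
        = ((πstar (Set.univ.pi X0))⁻¹ • πstar.restrict (Set.univ.pi X0)).map
            (fun x => x k))
    (hopt0 : ∀ π' : Measure (∀ k, X k), IsProbabilityMeasure π' →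
        (∀ k, π'.map (fun x => x k)
          = ((πstar (Set.univ.pi X0))⁻¹ • πstar.restrict (Set.univ.pi X0)).map
              (fun x => x k)) →
        ∫ x, c x ∂πt0 ≤ ∫ x, c x ∂π') :
    |(∫ x, c x ∂((πstar (Set.univ.pi X0)) • πt0
          + πstar.restrict (Set.univ.pi X0)ᶜ))
        - ∫ x in Set.univ.pi X0, c x ∂πt0| ≤ 2 * K * M * ε ∧
    sInf {r : ℝ | ∃ π : Measure (∀ k, X k), IsProbabilityMeasure π ∧
        (∀ k, π.map (fun x => x k) = μ k) ∧ r = ∫ x, c x ∂π}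
      ≤ sInf {r : ℝ | ∃ π' : Measure (∀ k, X k), IsProbabilityMeasure π' ∧
          (∀ k, π'.map (fun x => x k)
            = ((πstar (Set.univ.pi X0))⁻¹ • πstar.restrict (Set.univ.pi X0)).map
                (fun x => x k)) ∧ r = ∫ x, c x ∂π'}
        + 2 * K * M * ε := by
  have hX0 : ∀ k, MeasurableSet (X0 k) := fun k => (hX0c k).isClosed.measurableSet
  have hS : MeasurableSet (univ.pi X0) := .univ_pi hX0
  have hδ : πstar.real (univ.pi X0)ᶜ ≤ K * ε := by
    simpa using measureReal_compl_univ_pi_le πstar hX0 hε.le fun k => (hπstar k).symm ▸ hX0μ k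
  have hM0 : 0 ≤ M := (abs_nonneg _).trans (hM (nonempty_of_isProbabilityMeasure πstar).some)
  have hπt0 : πt0.restrict (univ.pi X0) = πt0 := Measure.restrict_eq_self_of_ae_mem hsupp
  have herror : |∫ x, c x ∂(πstar (univ.pi X0) • πt0 + πstar.restrict (univ.pi X0)ᶜ)
      - ∫ x in univ.pi X0, c x ∂πt0| ≤ 2 * K * M * ε := by
    rw [hπt0]
    calc _ ≤ 2 * M * πstar.real (univ.pi X0)ᶜ :=
          abs_integral_smul_add_restrict_compl_sub_le hS hc_cont.measurable hM
      _ ≤ 2 * M * (K * ε) := by gcongr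
      _ = 2 * K * M * ε := by ring
  have hglued := isProbabilityMeasure_smul_add_restrict_compl (π := πstar) (ν := πt0) hS
  have hbdd : BddBelow {r : ℝ | ∃ π : Measure (∀ k, X k), IsProbabilityMeasure π ∧
      (∀ k, π.map (fun x => x k) = μ k) ∧ r = ∫ x, c x ∂π} := by
    refine ⟨-M, ?_⟩
    rintro _ ⟨π, hπ, -, rfl⟩
    exact neg_le_of_abs_le (abs_integral_le_of_abs_le hM)
  refine ⟨herror, ?_⟩
  rw [hπt0] at herror
  calc _ ≤ ∫ x, c x ∂(πstar (univ.pi X0) • πt0 + πstar.restrict (univ.pi X0)ᶜ) :=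
        csInf_le hbdd ⟨_, hglued, fun k => (map_smul_add_restrict_compl_eq_map hS hpos.ne'
          (measurable_pi_apply k) (hmarg k)).trans (hπstar k), rfl⟩
    _ ≤ ∫ x, c x ∂πt0 + 2 * K * M * ε := by linarith [(abs_le.mp herror).2]
    _ ≤ _ := by
        gcongr
        exact le_csInf ⟨_, πt0, inferInstance, hmarg, rfl⟩
          fun r ⟨π', hπ', hmarg', hr⟩ => hr ▸ hopt0 π' hπ' hmarg'

/-- Truncation error estimate for the multimarginal Kantorovich problem. -/
theorem truncation_error_estimate {K : ℕ} {X : Fin K → Type*}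
    [∀ k, TopologicalSpace (X k)] [∀ k, PolishSpace (X k)]
    [∀ k, MeasurableSpace (X k)] [∀ k, BorelSpace (X k)]
    (μ : ∀ k, Measure (X k)) [∀ k, IsProbabilityMeasure (μ k)]
    (c : (∀ k, X k) → ℝ) (hc_cont : Continuous c)
    (M : ℝ) (hM : ∀ x, |c x| ≤ M)
    (ε : ℝ) (hε : 0 < ε) (hKε : (K : ℝ) * ε < 1)
    (X0 : ∀ k, Set (X k)) (hX0c : ∀ k, IsCompact (X0 k))
    (hX0μ : ∀ k, (μ k) (X0 k)ᶜ ≤ ENNReal.ofReal ε)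
    (πstar : Measure (∀ k, X k)) [IsProbabilityMeasure πstar]
    (hπstar : ∀ k, πstar.map (fun x => x k) = μ k)
    (hopt : ∀ π : Measure (∀ k, X k), IsProbabilityMeasure π →
        (∀ k, π.map (fun x => x k) = μ k) → ∫ x, c x ∂πstar ≤ ∫ x, c x ∂π)
    (hpos : 0 < πstar (Set.univ.pi X0))
    (πt0 : Measure (∀ k, X k)) [IsProbabilityMeasure πt0]
    (hsupp : πt0 (Set.univ.pi X0)ᶜ = 0)
    (hmarg : ∀ k, πt0.map (fun x => x k)
        = ((πstar (Set.univ.pi X0))⁻¹ • πstar.restrict (Set.univ.pi X0)).map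
            (fun x => x k))
    (hopt0 : ∀ π' : Measure (∀ k, X k), IsProbabilityMeasure π' →
        (∀ k, π'.map (fun x => x k)
          = ((πstar (Set.univ.pi X0))⁻¹ • πstar.restrict (Set.univ.pi X0)).map
              (fun x => x k)) →
        ∫ x, c x ∂πt0 ≤ ∫ x, c x ∂π') :
    |(∫ x, c x ∂((πstar (Set.univ.pi X0)) • πt0
          + πstar.restrict (Set.univ.pi X0)ᶜ))
        - ∫ x in Set.univ.pi X0, c x ∂πt0| ≤ 2 * K * M * ε ∧
    sInf {r : ℝ | ∃ π : Measure (∀ k, X k), IsProbabilityMeasure π ∧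
        (∀ k, π.map (fun x => x k) = μ k) ∧ r = ∫ x, c x ∂π}
      ≤ sInf {r : ℝ | ∃ π' : Measure (∀ k, X k), IsProbabilityMeasure π' ∧
          (∀ k, π'.map (fun x => x k)
            = ((πstar (Set.univ.pi X0))⁻¹ • πstar.restrict (Set.univ.pi X0)).map
                (fun x => x k)) ∧ r = ∫ x, c x ∂π'}
        + 2 * K * M * ε :=
  truncation_error_estimate_general μ c hc_cont M hM ε hε X0 hX0c hX0μ πstar hπstar hpos πt0 hsupp
    hmarg hopt0
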